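/- arXiv:cs/0611124 — 2 statements merged into one kernel-verified Lean document; each statement's English description precedes it below -/
import Mathlib

section
/- If k : X × X → ℝ and g : Y × Y → ℝ are positive semidefinite kernels, then the tensor product kernel k⊗((x₁,y₁),(x₂,y₂)) = k(x₁,x₂) · g(y₁,y₂) is a positive semidefinite kernel on X × Y. -/
theorem tensor_product_kernel_posSemidef {X Y : Type*}
    (k : X → X → ℝ) (g : Y → Y → ℝ)
    (hk_sym : ∀ a b, k a b = k b a)
    (hk_psd : ∀ (n : ℕ) (s : Fin n → X) (c : Fin n → ℝ),
      0 ≤ ∑ i, ∑ j, c i * c j * k (s i) (s j))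
    (hg_sym : ∀ a b, g a b = g b a)
    (hg_psd : ∀ (n : ℕ) (s : Fin n → Y) (c : Fin n → ℝ),
      0 ≤ ∑ i, ∑ j, c i * c j * g (s i) (s j)) :
    (∀ p q : X × Y, k p.1 q.1 * g p.2 q.2 = k q.1 p.1 * g q.2 p.2) ∧
    (∀ (n : ℕ) (s : Fin n → X × Y) (c : Fin n → ℝ),
      0 ≤ ∑ i, ∑ j, c i * c j * (k (s i).1 (s j).1 * g (s i).2 (s j).2)) := by
  constructor
  · intro p q; rw [hk_sym, hg_sym]
  · intro n s c
    set A : Matrix (Fin n) (Fin n) ℝ := Matrix.of fun i j => k (s i).1 (s j).1 with hA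
    set G : Matrix (Fin n) (Fin n) ℝ := Matrix.of fun i j => g (s i).2 (s j).2 with hG
    have hApsd : A.PosSemidef := by
      refine Matrix.posSemidef_iff_dotProduct_mulVec.mpr ⟨Matrix.IsHermitian.ext fun i j => ?_, fun x => ?_⟩
      · simpa [A, Matrix.conjTranspose_apply] using hk_sym (s j).1 (s i).1
      · have := hk_psd n (fun i => (s i).1) x
        simpa [A, dotProduct, Matrix.mulVec, Finset.mul_sum, mul_assoc,
          mul_comm, mul_left_comm] using this
    have hGpsd : G.PosSemidef := by
      refine Matrix.posSemidef_iff_dotProduct_mulVec.mpr ⟨Matrix.IsHermitian.ext fun i j => ?_, fun x => ?_⟩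
      · simpa [G, Matrix.conjTranspose_apply] using hg_sym (s j).2 (s i).2
      · have := hg_psd n (fun i => (s i).2) x
        simpa [G, dotProduct, Matrix.mulVec, Finset.mul_sum, mul_assoc,
          mul_comm, mul_left_comm] using this
    obtain ⟨B, hB⟩ : ∃ B : Matrix (Fin n) (Fin n) ℝ, _ = star B * B := by
      open scoped MatrixOrder Matrix.Norms.L2Operator in exact CStarAlgebra.nonneg_iff_eq_star_mul_self.mp hApsd.nonneg
    obtain ⟨C, hC⟩ : ∃ C : Matrix (Fin n) (Fin n) ℝ, _ = star C * C := by
      open scoped MatrixOrder Matrix.Norms.L2Operator in exact CStarAlgebra.nonneg_iff_eq_star_mul_self.mp hGpsd.nonneg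
    have hAe : ∀ i j, k (s i).1 (s j).1 = ∑ l, B l i * B l j := by
      intro i j
      have := congrFun (congrFun hB i) j
      simpa [Matrix.star_eq_conjTranspose, Matrix.mul_apply, Matrix.conjTranspose_apply, A] using this
    have hGe : ∀ i j, g (s i).2 (s j).2 = ∑ m, C m i * C m j := by
      intro i j
      have := congrFun (congrFun hC i) j
      simpa [Matrix.star_eq_conjTranspose, Matrix.mul_apply, Matrix.conjTranspose_apply, G] using this
    simp only [hAe, hGe]
    calc (0:ℝ) ≤ ∑ lm : Fin n × Fin n, (∑ i, c i * B lm.1 i * C lm.2 i)^2 := by positivity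
    _ = ∑ lm : Fin n × Fin n, ∑ ij : Fin n × Fin n,
          (c ij.1 * B lm.1 ij.1 * C lm.2 ij.1) * (c ij.2 * B lm.1 ij.2 * C lm.2 ij.2) := by
        refine Finset.sum_congr rfl fun lm _ => ?_
        rw [sq, Finset.sum_mul_sum]
        exact (Fintype.sum_prod_type fun ij => (c ij.1 * B lm.1 ij.1 * C lm.2 ij.1) * (c ij.2 * B lm.1 ij.2 * C lm.2 ij.2)).symm
    _ = ∑ ij : Fin n × Fin n, ∑ lm : Fin n × Fin n,
          (c ij.1 * B lm.1 ij.1 * C lm.2 ij.1) * (c ij.2 * B lm.1 ij.2 * C lm.2 ij.2) :=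
        Finset.sum_comm
    _ = ∑ i, ∑ j, c i * c j * ((∑ l, B l i * B l j) * (∑ m, C m i * C m j)) := by
        rw [Fintype.sum_prod_type]
        refine Finset.sum_congr rfl fun i _ => ?_
        refine Finset.sum_congr rfl fun j _ => ?_
        conv_rhs => rw [Finset.sum_mul_sum, Finset.mul_sum]
        rw [Fintype.sum_prod_type]
        refine Finset.sum_congr rfl fun l _ => ?_
        rw [Finset.mul_sum]
        refine Finset.sum_congr rfl fun m _ => ?_
        ring
end

section
/- For any real m×n matrix M, the trace norm (sum of singular values) equals the infimum over all factorizations M = U Vᵀ (with U : m×k, V : n×k for some k) of (1/2)(‖U‖_F² + ‖V‖_F²), where ‖·‖_F is the Frobenius norm. -/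
open Matrix

/-- The trace norm of a real matrix: the sum of the square roots of the
eigenvalues of `MᵀM` (i.e., the sum of the singular values). -/
noncomputable def traceNorm {m n : ℕ} (M : Matrix (Fin m) (Fin n) ℝ) : ℝ :=
  ∑ i, Real.sqrt ((Matrix.isHermitian_conjTranspose_mul_self M).eigenvalues i)

lemma trace_transpose_mul_eq_sum {a b : ℕ} (X Y : Matrix (Fin a) (Fin b) ℝ) :
    (Xᵀ * Y).trace = ∑ j, ∑ i, X i j * Y i j := by
  simp [Matrix.trace, Matrix.mul_apply, Matrix.diag]

theorem traceNorm_eq_inf_factorizations {m n : ℕ} (M : Matrix (Fin m) (Fin n) ℝ) :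
    traceNorm M = sInf {c : ℝ | ∃ (k : ℕ) (U : Matrix (Fin m) (Fin k) ℝ)
      (V : Matrix (Fin n) (Fin k) ℝ), M = U * Vᵀ ∧
      c = (1 / 2) * ((U * Uᵀ).trace + (V * Vᵀ).trace)} := by
  classical
  have hA : (Mᴴ * M).IsHermitian := Matrix.isHermitian_conjTranspose_mul_self M
  set lam : Fin n → ℝ := hA.eigenvalues with hlamdef
  have hlam0 : ∀ i, 0 ≤ lam i := fun i =>
    Matrix.eigenvalues_conjTranspose_mul_self_nonneg M i
  set s : Fin n → ℝ := fun i => Real.sqrt (lam i) with hsdef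
  have hs0 : ∀ i, 0 ≤ s i := fun i => Real.sqrt_nonneg _
  have hssq : ∀ i, s i * s i = lam i := fun i => Real.mul_self_sqrt (hlam0 i)
  have hsne : ∀ i, lam i ≠ 0 → s i ≠ 0 := by
    intro i hi
    simp only [hsdef]
    exact Real.sqrt_ne_zero'.mpr (lt_of_le_of_ne (hlam0 i) (Ne.symm hi))
  have htn : traceNorm M = ∑ i, s i := rfl
  set Q : Matrix (Fin n) (Fin n) ℝ := (hA.eigenvectorUnitary : Matrix (Fin n) (Fin n) ℝ) with hQdef
  have hQmem : Q ∈ Matrix.unitaryGroup (Fin n) ℝ := hA.eigenvectorUnitary.2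
  have hQ1 : Qᵀ * Q = 1 := by
    have := Matrix.mem_unitaryGroup_iff'.mp hQmem
    simpa [Matrix.star_eq_conjTranspose,
      Matrix.conjTranspose_eq_transpose_of_trivial] using this
  have hQ2 : Q * Qᵀ = 1 := by
    have := Matrix.mem_unitaryGroup_iff.mp hQmem
    simpa [Matrix.star_eq_conjTranspose,
      Matrix.conjTranspose_eq_transpose_of_trivial] using this
  have hstar : star Q = Qᵀ := by
    rw [Matrix.star_eq_conjTranspose, Matrix.conjTranspose_eq_transpose_of_trivial]
  have hspec : Mᵀ * M = Q * Matrix.diagonal lam * Qᵀ := by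
    have h2 : Mᴴ = Mᵀ := Matrix.conjTranspose_eq_transpose_of_trivial M
    rw [← h2, ← hstar]
    convert hA.spectral_theorem using 3
    rw [Unitary.conjStarAlgAut_apply]
    rfl
  set N : Matrix (Fin m) (Fin n) ℝ := M * Q with hNdef
  have hNQ : N * Qᵀ = M := by
    rw [hNdef, Matrix.mul_assoc, hQ2, Matrix.mul_one]
  have hNN : Nᵀ * N = Matrix.diagonal lam := by
    have e0 : Nᵀ * N = Qᵀ * (Mᵀ * M) * Q := by
      rw [hNdef, Matrix.transpose_mul]
      simp only [Matrix.mul_assoc]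
    rw [e0, hspec]
    have e1 : Qᵀ * (Q * Matrix.diagonal lam * Qᵀ) * Q
        = (Qᵀ * Q) * Matrix.diagonal lam * (Qᵀ * Q) := by
      simp only [Matrix.mul_assoc]
    rw [e1, hQ1, Matrix.one_mul, Matrix.mul_one]
  have hNzero : ∀ j, lam j = 0 → ∀ i, N i j = 0 := by
    intro j hj i
    have hd : (Nᵀ * N) j j = lam j := by rw [hNN]; simp
    have hsum : ∑ i, N i j * N i j = 0 := by
      rw [← hj, ← hd]
      simp [Matrix.mul_apply]
    have := (Finset.sum_eq_zero_iff_of_nonneg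
      (fun i _ => mul_self_nonneg (N i j))).mp hsum i (Finset.mem_univ i)
    exact mul_self_eq_zero.mp this
  clear_value N Q
  -- the achieving factorization
  set g : Fin n → ℝ := fun i => if lam i = 0 then 0 else (Real.sqrt (s i))⁻¹ with hgdef
  clear_value g
  set U0 : Matrix (Fin m) (Fin n) ℝ := N * Matrix.diagonal g with hU0def
  set V0 : Matrix (Fin n) (Fin n) ℝ :=
    Q * Matrix.diagonal (fun i => Real.sqrt (s i)) with hV0def
  clear_value U0 V0
  have hfact : M = U0 * V0ᵀ := by
    have e0 : U0 * V0ᵀ = N * (Matrix.diagonal (fun i => g i * Real.sqrt (s i)) * Qᵀ) := by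
      rw [hU0def, hV0def, Matrix.transpose_mul, Matrix.diagonal_transpose,
        ← Matrix.diagonal_mul_diagonal]
      simp only [Matrix.mul_assoc]
    have e1 : N * Matrix.diagonal (fun i => g i * Real.sqrt (s i)) = N := by
      ext i j
      rw [Matrix.mul_diagonal]
      by_cases hj : lam j = 0
      · simp [hNzero j hj i]
      · have hsj : Real.sqrt (s j) ≠ 0 :=
          Real.sqrt_ne_zero'.mpr (lt_of_le_of_ne (hs0 j) (Ne.symm (hsne j hj)))
        simp [hgdef, hj, inv_mul_cancel₀ hsj]
    rw [e0, ← Matrix.mul_assoc, e1, hNQ]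
  have hU0tr : (U0 * U0ᵀ).trace = ∑ i, s i := by
    rw [Matrix.trace_mul_comm, hU0def, Matrix.transpose_mul, Matrix.diagonal_transpose]
    have e0 : Matrix.diagonal g * Nᵀ * (N * Matrix.diagonal g)
        = Matrix.diagonal g * (Nᵀ * N) * Matrix.diagonal g := by
      simp only [Matrix.mul_assoc]
    rw [e0, hNN, Matrix.diagonal_mul_diagonal, Matrix.diagonal_mul_diagonal,
      Matrix.trace_diagonal]
    refine Finset.sum_congr rfl fun i _ => ?_
    by_cases hi : lam i = 0
    · simp [hgdef, hi, hsdef, Real.sqrt_eq_zero', hi.le]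
    · have hsi := hsne i hi
      have hsq : Real.sqrt (s i) * Real.sqrt (s i) = s i := Real.mul_self_sqrt (hs0 i)
      simp only [hgdef, hi, if_neg]
      rw [← hssq i]
      field_simp
      rw [if_neg not_false, div_pow, one_pow, Real.sq_sqrt (hs0 i)]
      exact one_div_mul_cancel hsi
  have hV0tr : (V0 * V0ᵀ).trace = ∑ i, s i := by
    rw [Matrix.trace_mul_comm, hV0def, Matrix.transpose_mul, Matrix.diagonal_transpose]
    have e0 : Matrix.diagonal (fun i => Real.sqrt (s i)) * Qᵀ *
        (Q * Matrix.diagonal (fun i => Real.sqrt (s i)))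
        = Matrix.diagonal (fun i => Real.sqrt (s i)) * (Qᵀ * Q) *
          Matrix.diagonal (fun i => Real.sqrt (s i)) := by
      simp only [Matrix.mul_assoc]
    rw [e0, hQ1, Matrix.mul_one, Matrix.diagonal_mul_diagonal, Matrix.trace_diagonal]
    exact Finset.sum_congr rfl fun i _ => Real.mul_self_sqrt (hs0 i)
  have hmem : traceNorm M ∈ {c : ℝ | ∃ (k : ℕ) (U : Matrix (Fin m) (Fin k) ℝ)
      (V : Matrix (Fin n) (Fin k) ℝ), M = U * Vᵀ ∧
      c = (1 / 2) * ((U * Uᵀ).trace + (V * Vᵀ).trace)} := by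
    refine ⟨n, U0, V0, hfact, ?_⟩
    rw [hU0tr, hV0tr, htn]; ring
  -- lower bound
  have hlb : ∀ c ∈ {c : ℝ | ∃ (k : ℕ) (U : Matrix (Fin m) (Fin k) ℝ)
      (V : Matrix (Fin n) (Fin k) ℝ), M = U * Vᵀ ∧
      c = (1 / 2) * ((U * Uᵀ).trace + (V * Vᵀ).trace)}, traceNorm M ≤ c := by
    rintro c ⟨k, U, V, hMUV, rfl⟩
    set F : Matrix (Fin n) (Fin n) ℝ :=
      Matrix.diagonal (fun i => if lam i = 0 then 0 else (s i)⁻¹) with hFdef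
    set E : Matrix (Fin n) (Fin n) ℝ :=
      Matrix.diagonal (fun i => if lam i = 0 then (0:ℝ) else 1) with hEdef
    set W : Matrix (Fin m) (Fin n) ℝ := N * F * Qᵀ with hWdef
    clear_value F E W
    have hWT : Wᵀ = Q * F * Nᵀ := by
      rw [hWdef]
      simp only [Matrix.transpose_mul, Matrix.transpose_transpose]
      rw [hFdef, Matrix.diagonal_transpose]
      simp only [Matrix.mul_assoc]
    have htrW : (Wᵀ * M).trace = ∑ i, s i := by
      rw [hWT]
      have e0 : Q * F * Nᵀ * M = Q * (F * (Nᵀ * M)) := by simp only [Matrix.mul_assoc]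
      rw [e0, Matrix.trace_mul_comm, Matrix.mul_assoc, Matrix.mul_assoc]
      have e1 : Nᵀ * (M * Q) = Matrix.diagonal lam := by rw [← hNdef, hNN]
      rw [e1, hFdef, Matrix.diagonal_mul_diagonal, Matrix.trace_diagonal]
      refine Finset.sum_congr rfl fun i _ => ?_
      by_cases hi : lam i = 0
      · simp [hi, hsdef, Real.sqrt_eq_zero', hi.le]
      · rw [if_neg hi, ← hssq i]
        field_simp [hsne i hi]
    have hWTW : Wᵀ * W = Q * E * Qᵀ := by
      rw [hWT, hWdef]
      have e0 : Q * F * Nᵀ * (N * F * Qᵀ) = Q * (F * (Nᵀ * N) * F) * Qᵀ := by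
        simp only [Matrix.mul_assoc]
      rw [e0, hNN, hFdef, hEdef]
      have hd : Matrix.diagonal (fun i => if lam i = 0 then (0:ℝ) else (s i)⁻¹) *
          Matrix.diagonal lam *
          Matrix.diagonal (fun i => if lam i = 0 then (0:ℝ) else (s i)⁻¹)
          = Matrix.diagonal (fun i => if lam i = 0 then (0:ℝ) else 1) := by
        have hfun : (fun i => (if lam i = 0 then (0:ℝ) else (s i)⁻¹) * lam i *
            (if lam i = 0 then (0:ℝ) else (s i)⁻¹))
            = (fun i => if lam i = 0 then (0:ℝ) else 1) := by
          funext i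
          by_cases hi : lam i = 0
          · simp [hi]
          · have hsi := hsne i hi
            rw [if_neg hi, if_neg hi, ← hssq i]
            field_simp
        rw [Matrix.diagonal_mul_diagonal, Matrix.diagonal_mul_diagonal, hfun]
      rw [hd]
    set P : Matrix (Fin m) (Fin k) ℝ := W * V with hPdef
    set R : Matrix (Fin n) (Fin k) ℝ := Qᵀ * V with hRdef
    clear_value P R
    have h1 : (∑ i, s i) = (Pᵀ * U).trace := by
      rw [← htrW, hMUV, hPdef, Matrix.transpose_mul]
      have e0 : Wᵀ * (U * Vᵀ) = (Wᵀ * U) * Vᵀ := by simp only [Matrix.mul_assoc]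
      rw [e0, Matrix.trace_mul_comm]
      simp only [Matrix.mul_assoc]
    have hPP : Pᵀ * P = Rᵀ * (E * R) := by
      rw [hPdef, hRdef, Matrix.transpose_mul, Matrix.transpose_mul]
      have e0 : Vᵀ * Wᵀ * (W * V) = Vᵀ * (Wᵀ * W) * V := by simp only [Matrix.mul_assoc]
      rw [e0, hWTW]
      simp only [Matrix.mul_assoc, Matrix.transpose_transpose]
    have hRR : (Rᵀ * R).trace = (Vᵀ * V).trace := by
      rw [hRdef, Matrix.transpose_mul, Matrix.transpose_transpose]
      have e0 : Vᵀ * Q * (Qᵀ * V) = Vᵀ * (Q * Qᵀ) * V := by simp only [Matrix.mul_assoc]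
      rw [e0, hQ2, Matrix.mul_one]
    have h3 : (Pᵀ * P).trace ≤ (Vᵀ * V).trace := by
      rw [hPP, ← hRR, trace_transpose_mul_eq_sum, trace_transpose_mul_eq_sum]
      refine Finset.sum_le_sum fun j _ => Finset.sum_le_sum fun i _ => ?_
      have he : (E * R) i j = (if lam i = 0 then (0:ℝ) else 1) * R i j := by
        rw [hEdef, Matrix.diagonal_mul]
      rw [he]
      by_cases hi : lam i = 0
      · simp [hi, mul_self_nonneg]
      · simp [hi, le_refl]
    have h2 : 2 * (Pᵀ * U).trace ≤ (Pᵀ * P).trace + (Uᵀ * U).trace := by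
      rw [trace_transpose_mul_eq_sum, trace_transpose_mul_eq_sum,
        trace_transpose_mul_eq_sum, ← Finset.sum_add_distrib, Finset.mul_sum]
      refine Finset.sum_le_sum fun j _ => ?_
      rw [← Finset.sum_add_distrib, Finset.mul_sum]
      refine Finset.sum_le_sum fun i _ => ?_
      nlinarith [sq_nonneg (P i j - U i j)]
    have hU : (Uᵀ * U).trace = (U * Uᵀ).trace := Matrix.trace_mul_comm _ _
    have hV : (Vᵀ * V).trace = (V * Vᵀ).trace := Matrix.trace_mul_comm _ _
    rw [htn, h1]
    linarith
  exact le_antisymm (le_csInf ⟨traceNorm M, hmem⟩ hlb)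
    (csInf_le ⟨traceNorm M, fun c hc => hlb c hc⟩ hmem)
end
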